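/- Let C be a positive natural number, j : Fin C a fixed index, σ² > 0, g_j > 0, and g_c ≥ 0 for all c ≠ j. Define γ(exp(p̃)) = g_j · exp(p̃_j) / (σ² + ∑_{c ≠ j} g_c · exp(p̃_c)). Then the function p̃ ↦ log(log(1 + γ(exp(p̃)))) is concave on ℝ^C (Fin C → ℝ). -/

import Mathlib

/-!
Put `ℓ(p) = log γ(exp p) = log g_j + p_j - log (σ² + ∑_{c ≠ j} g_c e^{p_c})`. The subtracted term
is a log-sum-exp, convex by Hölder's inequality, so `ℓ` is concave. The function in question is
`φ ∘ ℓ` with `φ t = log (log (1 + e^t))`, which is nondecreasing and concave, since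
`φ'' = e^t (log (1 + e^t) - e^t) / ((1 + e^t) log (1 + e^t))²` and `log (1 + u) ≤ u`.
-/

open Real Finset

theorem Real.sum_rpow_mul_rpow_le {ι : Type*} (s : Finset ι) {u v : ι → ℝ}
    (hu : ∀ i ∈ s, 0 ≤ u i) (hv : ∀ i ∈ s, 0 ≤ v i) {a b : ℝ}
    (ha : 0 < a) (hb : 0 < b) (hab : a + b = 1) :
    ∑ i ∈ s, u i ^ a * v i ^ b ≤ (∑ i ∈ s, u i) ^ a * (∑ i ∈ s, v i) ^ b := by
  have := inner_le_Lp_mul_Lq_of_nonneg s (HolderConjugate.inv_inv ha hb hab)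
    (fun i hi => rpow_nonneg (hu i hi) a) (fun i hi => rpow_nonneg (hv i hi) b)
  rwa [sum_congr rfl fun i hi => rpow_rpow_inv (hu i hi) ha.ne',
    sum_congr rfl fun i hi => rpow_rpow_inv (hv i hi) hb.ne', one_div, inv_inv, one_div,
    inv_inv] at this

theorem Real.rpow_mul_rpow_of_add_eq_one {c : ℝ} (hc : 0 ≤ c) {a b : ℝ} (hab : a + b = 1) :
    c ^ a * c ^ b = c := by
  rw [← rpow_add' hc (by simp [hab]), hab, rpow_one]

theorem Real.mul_exp_rpow_mul_mul_exp_rpow {c : ℝ} (hc : 0 ≤ c) (x y : ℝ) {a b : ℝ}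
    (hab : a + b = 1) :
    (c * exp x) ^ a * (c * exp y) ^ b = c * exp (a * x + b * y) := by
  rw [mul_rpow hc (exp_pos x).le, mul_rpow hc (exp_pos y).le, ← exp_mul, ← exp_mul,
    mul_mul_mul_comm, rpow_mul_rpow_of_add_eq_one hc hab, ← exp_add, mul_comm x, mul_comm y]

theorem convexOn_log_add_sum_mul_exp {ι : Type*} (s : Finset ι) {c : ℝ} (hc : 0 < c)
    {w : ι → ℝ} (hw : ∀ i ∈ s, 0 ≤ w i) :
    ConvexOn ℝ Set.univ (fun x : ι → ℝ => log (c + ∑ i ∈ s, w i * exp (x i))) := by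
  set S : (ι → ℝ) → ℝ := fun x => c + ∑ i ∈ s, w i * exp (x i)
  have hS : ∀ x, 0 < S x := fun x =>
    add_pos_of_pos_of_nonneg hc (sum_nonneg fun i hi => mul_nonneg (hw i hi) (exp_pos _).le)
  refine convexOn_iff_forall_pos.2 ⟨convex_univ, fun x _ y _ a b ha hb hab => ?_⟩
  have holder : S (a • x + b • y) ≤ S x ^ a * S y ^ b := by
    have hterm : ∀ z : ι → ℝ, ∀ o ∈ insertNone s, 0 ≤ o.elim c fun i => w i * exp (z i) := by
      rintro z (_ | i) hi
      exacts [hc.le, mul_nonneg (hw i (by simpa using hi)) (exp_pos _).le]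
    have := sum_rpow_mul_rpow_le (insertNone s) (hterm x) (hterm y) ha hb hab
    simp only [sum_insertNone, Option.elim] at this
    refine le_of_eq_of_le ?_ this
    rw [rpow_mul_rpow_of_add_eq_one hc.le hab]
    refine congrArg (c + ·) (sum_congr rfl fun i hi => ?_)
    rw [mul_exp_rpow_mul_mul_exp_rpow (hw i hi) _ _ hab]
    rfl
  calc log (S (a • x + b • y)) ≤ log (S x ^ a * S y ^ b) := log_le_log (hS _) holder
    _ = a • log (S x) + b • log (S y) := by
      rw [log_mul (rpow_pos_of_pos (hS x) a).ne' (rpow_pos_of_pos (hS y) b).ne',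
        log_rpow (hS x), log_rpow (hS y), smul_eq_mul, smul_eq_mul]

theorem ConcaveOn.comp_of_monotone {E : Type*} [AddCommMonoid E] [SMul ℝ E] {s : Set E}
    {f : E → ℝ} {g : ℝ → ℝ} (hg : ConcaveOn ℝ Set.univ g) (hg' : Monotone g)
    (hf : ConcaveOn ℝ s f) : ConcaveOn ℝ s (g ∘ f) :=
  ⟨hf.1, fun _ hx _ hy _ _ ha hb hab =>
    (hg.2 trivial trivial ha hb hab).trans (hg' (hf.2 hx hy ha hb hab))⟩

theorem Real.log_one_add_exp_pos (x : ℝ) : 0 < log (1 + exp x) :=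
  log_pos (lt_add_of_pos_right 1 (exp_pos x))

theorem Real.log_one_add_exp_le_exp (x : ℝ) : log (1 + exp x) ≤ exp x := by
  linarith [log_le_sub_one_of_pos (by positivity : 0 < 1 + exp x)]

theorem Real.monotone_log_log_one_add_exp : Monotone fun x => log (log (1 + exp x)) :=
  fun _ _ hxy => log_le_log (log_one_add_exp_pos _) (log_le_log (by positivity) (by gcongr))

theorem Real.hasDerivAt_log_one_add_exp (x : ℝ) :
    HasDerivAt (fun x => log (1 + exp x)) (exp x / (1 + exp x)) x :=
  ((hasDerivAt_exp x).const_add 1).log (by positivity)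

theorem Real.concaveOn_log_log_one_add_exp :
    ConcaveOn ℝ Set.univ fun x => log (log (1 + exp x)) := by
  have hpos (x : ℝ) : 0 < (1 + exp x) * log (1 + exp x) :=
    mul_pos (by positivity) (log_one_add_exp_pos x)
  have hderiv (x : ℝ) : HasDerivAt (fun x => log (log (1 + exp x)))
      (exp x / ((1 + exp x) * log (1 + exp x))) x := by
    simpa only [div_div] using (hasDerivAt_log_one_add_exp x).log (log_one_add_exp_pos x).ne'
  have hderiv2 (x : ℝ) : HasDerivAt (fun x => exp x / ((1 + exp x) * log (1 + exp x)))
      (exp x * (log (1 + exp x) - exp x) / ((1 + exp x) * log (1 + exp x)) ^ 2) x := by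
    refine ((hasDerivAt_exp x).div (((hasDerivAt_exp x).const_add 1).mul
      (hasDerivAt_log_one_add_exp x)) (hpos x).ne').congr_deriv ?_
    simp only [Pi.mul_apply]
    field_simp
    ring
  refine concaveOn_of_hasDerivWithinAt2_nonpos convex_univ
    (fun x _ => (hderiv x).continuousAt.continuousWithinAt)
    (fun x _ => (hderiv x).hasDerivWithinAt) (fun x _ => (hderiv2 x).hasDerivWithinAt)
    (fun x _ => ?_)
  exact div_nonpos_of_nonpos_of_nonneg
    (mul_nonpos_of_nonneg_of_nonpos (exp_pos x).le (sub_nonpos.2 (log_one_add_exp_le_exp x)))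
    (sq_nonneg _)

theorem Real.exp_log_add_sub_log {a b : ℝ} (ha : 0 < a) (hb : 0 < b) (x : ℝ) :
    exp (log a + x - log b) = a * exp x / b := by
  rw [exp_sub, exp_add, exp_log ha, exp_log hb]

theorem loglog_one_add_SINR_concave_general (C : ℕ) (j : Fin C) (σ2 : ℝ) (hσ2 : 0 < σ2)
    (g : Fin C → ℝ) (hgj : 0 < g j) (hg : ∀ c, c ≠ j → 0 ≤ g c) :
    ConcaveOn ℝ Set.univ
      (fun pt : Fin C → ℝ =>
        Real.log (Real.log (1 +
          g j * Real.exp (pt j) /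
            (σ2 + ∑ c ∈ Finset.univ.erase j, g c * Real.exp (pt c))))) := by
  have hS (p : Fin C → ℝ) : 0 < σ2 + ∑ c ∈ univ.erase j, g c * exp (p c) :=
    add_pos_of_pos_of_nonneg hσ2 <| sum_nonneg fun c hc =>
      mul_nonneg (hg c (ne_of_mem_erase hc)) (exp_pos _).le
  have hlogSINR : ConcaveOn ℝ Set.univ fun p : Fin C → ℝ =>
      log (g j) + p j - log (σ2 + ∑ c ∈ univ.erase j, g c * exp (p c)) :=
    ((concaveOn_const _ convex_univ).add ((LinearMap.proj j).concaveOn convex_univ)).sub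
      (convexOn_log_add_sum_mul_exp _ hσ2 fun c hc => hg c (ne_of_mem_erase hc))
  refine (concaveOn_log_log_one_add_exp.comp_of_monotone monotone_log_log_one_add_exp
    hlogSINR).congr fun p _ => ?_
  simp only [Function.comp_apply, exp_log_add_sub_log hgj (hS p)]

/-- With `γ(exp p̃) = g_j exp(p̃_j) / (σ² + ∑_{c ≠ j} g_c exp(p̃_c))`,
the function `p̃ ↦ log (log (1 + γ(exp p̃)))` is concave on `Fin C → ℝ`. -/
theorem loglog_one_add_SINR_concave (C : ℕ) (hC : 0 < C) (j : Fin C) (σ2 : ℝ) (hσ2 : 0 < σ2)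
    (g : Fin C → ℝ) (hgj : 0 < g j) (hg : ∀ c, c ≠ j → 0 ≤ g c) :
    ConcaveOn ℝ Set.univ
      (fun pt : Fin C → ℝ =>
        Real.log (Real.log (1 +
          g j * Real.exp (pt j) /
            (σ2 + ∑ c ∈ Finset.univ.erase j, g c * Real.exp (pt c))))) :=
  loglog_one_add_SINR_concave_general C j σ2 hσ2 g hgj hg
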